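/- arXiv:1605.06665 — 4 statements merged into one kernel-verified Lean document; each statement's English description precedes it below -/
import Mathlib

section
/- Let x, y, q ∈ ℝ^d with ‖x − y‖ ≤ 2n + 2ψ where ψ ≥ 0, and suppose the distance from q to the line segment from x to y is at least R > 0. Assume ‖x−q‖ + ‖q−y‖ ≤ 10n. Then ‖x−q‖ + ‖q−y‖ − ‖x−y‖ ≥ R²/(10n). (Additivity defect of the triangle inequality is at least quadratic in the transverse distance.) -/
/-!
Put `a = ‖x - q‖`, `b = ‖q - y‖`, `c = ‖x - y‖` and let `p` be the point of `[x, y]` dividing it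
in the ratio `a : b`. Then `(a + b) (q - p) = a (q - y) - b (x - q)`, and expanding the square gives
the exact identity `(a + b)² ‖q - p‖² = a b (a + b - c)(a + b + c)`. Since `4ab ≤ (a + b)²` and
`c ≤ a + b`, this yields `2 ‖q - p‖² ≤ (a + b)(a + b - c)`, so the defect `a + b - c` is at least
`2R² / (a + b)`.
-/

variable {E : Type*} [NormedAddCommGroup E] [InnerProductSpace ℝ E]

theorem norm_norm_smul_sub_norm_smul_sq (u v : E) :
    ‖‖u‖ • v - ‖v‖ • u‖ ^ 2 = ‖u‖ * ‖v‖ * ((‖u‖ + ‖v‖) ^ 2 - ‖u + v‖ ^ 2) := by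
  rw [norm_sub_sq_real, norm_add_sq_real, norm_smul, norm_smul, real_inner_smul_left,
    real_inner_smul_right, real_inner_comm, norm_norm, norm_norm]
  ring

theorem exists_mem_segment_sq_mul_norm_sub_sq_eq (x y q : E) :
    ∃ p ∈ segment ℝ x y, (‖x - q‖ + ‖q - y‖) ^ 2 * ‖q - p‖ ^ 2 =
      ‖x - q‖ * ‖q - y‖ * ((‖x - q‖ + ‖q - y‖) ^ 2 - ‖x - y‖ ^ 2) := by
  set a := ‖x - q‖
  set b := ‖q - y‖
  rcases (add_nonneg (norm_nonneg _) (norm_nonneg _) : 0 ≤ a + b).eq_or_lt with hab | hab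
  · have ha : a = 0 := by linarith [norm_nonneg (x - q), norm_nonneg (q - y)]
    have hb : b = 0 := by linarith
    exact ⟨x, left_mem_segment ℝ x y, by simp [ha, hb]⟩
  refine ⟨(b / (a + b)) • x + (a / (a + b)) • y,
    ⟨b / (a + b), a / (a + b), by positivity, by positivity, by field_simp; ring, rfl⟩, ?_⟩
  have hsmul : (a + b) • (q - ((b / (a + b)) • x + (a / (a + b)) • y)) =
      a • (q - y) - b • (x - q) := by
    match_scalars <;> field_simp
    ring
  have hxy : x - y = (x - q) + (q - y) := by abel
  rw [hxy, ← norm_norm_smul_sub_norm_smul_sq, ← hsmul, norm_smul, Real.norm_of_nonneg hab.le,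
    mul_pow]

theorem exists_mem_segment_two_mul_norm_sub_sq_le (x y q : E) :
    ∃ p ∈ segment ℝ x y,
      2 * ‖q - p‖ ^ 2 ≤ (‖x - q‖ + ‖q - y‖) * (‖x - q‖ + ‖q - y‖ - ‖x - y‖) := by
  obtain ⟨p, hp, h⟩ := exists_mem_segment_sq_mul_norm_sub_sq_eq x y q
  refine ⟨p, hp, ?_⟩
  set a := ‖x - q‖
  set b := ‖q - y‖
  set c := ‖x - y‖
  have hc : c ≤ a + b := by simpa [c, a, b] using norm_sub_le_norm_sub_add_norm_sub x q y
  have ha : 0 ≤ a := norm_nonneg _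
  have hb : 0 ≤ b := norm_nonneg _
  have hc0 : 0 ≤ c := norm_nonneg _
  rcases (add_nonneg ha hb).eq_or_lt with hab | hab
  · have hxq : x = q := norm_sub_eq_zero_iff.1 (by linarith)
    have hqy : q = y := norm_sub_eq_zero_iff.1 (by linarith)
    subst hxq hqy
    rw [segment_same, Set.mem_singleton_iff] at hp
    rw [hp, sub_self, norm_zero]
    nlinarith
  have hprod : a * b * (a + b + c) ≤ (a + b) ^ 3 / 2 := by
    nlinarith [sq_nonneg (a - b), mul_nonneg ha hb]
  have : (a + b) ^ 2 * (2 * ‖q - p‖ ^ 2) ≤ (a + b) ^ 2 * ((a + b) * (a + b - c)) := by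
    nlinarith [mul_le_mul_of_nonneg_right hprod (sub_nonneg.2 hc)]
  exact le_of_mul_le_mul_left this (by positivity)

theorem stmt8_general {d : ℕ} (x y q : EuclideanSpace ℝ (Fin d)) (n R : ℝ)
    (hn : 0 < n) (hR : 0 < R)
    (hseg : ∀ p ∈ segment ℝ x y, R ≤ ‖q - p‖)
    (hsum : ‖x - q‖ + ‖q - y‖ ≤ 10 * n) :
    ‖x - q‖ + ‖q - y‖ - ‖x - y‖ ≥ R ^ 2 / (10 * n) := by
  obtain ⟨p, hp, hdefect⟩ := exists_mem_segment_two_mul_norm_sub_sq_le x y q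
  have hRp : R ^ 2 ≤ ‖q - p‖ ^ 2 := pow_le_pow_left₀ hR.le (hseg p hp) 2
  have hnonneg : 0 ≤ ‖x - q‖ + ‖q - y‖ - ‖x - y‖ := by
    linarith [norm_sub_le_norm_sub_add_norm_sub x q y]
  rw [ge_iff_le, div_le_iff₀ (by positivity)]
  nlinarith [mul_le_mul_of_nonneg_left hsum hnonneg]

theorem stmt8 {d : ℕ} (x y q : EuclideanSpace ℝ (Fin d)) (n ψ R : ℝ)
    (hψ : 0 ≤ ψ) (hn : 0 < n) (hR : 0 < R)
    (hxy : ‖x - y‖ ≤ 2 * n + 2 * ψ)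
    (hseg : ∀ p ∈ segment ℝ x y, R ≤ ‖q - p‖)
    (hsum : ‖x - q‖ + ‖q - y‖ ≤ 10 * n) :
    ‖x - q‖ + ‖q - y‖ - ‖x - y‖ ≥ R ^ 2 / (10 * n) :=
  stmt8_general x y q n R hn hR hseg hsum
end

section
/- Let x, q, y ∈ ℝ^d and write a = ‖x−q‖, b = ‖q−y‖, c = ‖x−y‖ with a, b > 0. Let h be the distance from q to the line through x and y. Then a + b − c ≥ h²/(a+b). -/
/-!
The point `z` dividing the segment `[x, y]` in the ratio `a : b` lies on the line, so
`h ≤ ‖q - z‖`. Stewart's identity gives `(a + b)² ‖q - z‖² = a b ((a + b)² - c²)`, and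
`a b (a + b + c) ≤ (a + b)³` then bounds this by `(a + b)³ (a + b - c)`.
-/

open Metric

theorem norm_sub_lineMap_sq {V : Type*} [NormedAddCommGroup V] [InnerProductSpace ℝ V]
    (p x y : V) (t : ℝ) :
    ‖p - AffineMap.lineMap x y t‖ ^ 2 =
      (1 - t) * ‖p - x‖ ^ 2 + t * ‖p - y‖ ^ 2 - t * (1 - t) * ‖x - y‖ ^ 2 := by
  have hsplit : p - AffineMap.lineMap x y t = (1 - t) • (p - x) + t • (p - y) := by
    rw [AffineMap.lineMap_apply_module]
    module
  have hxy : ‖x - y‖ ^ 2 = ‖p - x‖ ^ 2 - 2 * inner ℝ (p - x) (p - y) + ‖p - y‖ ^ 2 := by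
    rw [← norm_sub_sq_real, norm_sub_rev, sub_sub_sub_cancel_left]
  rw [hsplit, hxy, norm_add_sq_real, norm_smul, norm_smul, inner_smul_left, inner_smul_right,
    Real.norm_eq_abs, Real.norm_eq_abs, mul_pow, mul_pow, sq_abs, sq_abs, conj_trivial]
  ring

theorem stewart_ratio_le_mul_sub {a b c : ℝ} (ha : 0 ≤ a) (hb : 0 ≤ b)
    (hcab : c ≤ a + b) :
    (1 - a / (a + b)) * a ^ 2 + a / (a + b) * b ^ 2 - a / (a + b) * (1 - a / (a + b)) * c ^ 2 ≤
      (a + b) * (a + b - c) := by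
  rcases (add_nonneg ha hb).eq_or_lt with hab | hab
  · have ha0 : a = 0 := by linarith
    have hb0 : b = 0 := by linarith
    simp [ha0, hb0]
  have hstewart : (1 - a / (a + b)) * a ^ 2 + a / (a + b) * b ^ 2
      - a / (a + b) * (1 - a / (a + b)) * c ^ 2 = a * b * (a + b + c) * (a + b - c) / (a + b) ^ 2 := by
    field_simp
    ring
  have hcube : a * b * (a + b + c) ≤ (a + b) ^ 3 := by
    nlinarith [sq_nonneg (a - b), mul_nonneg ha hb]
  rw [hstewart, div_le_iff₀ (by positivity)]
  calc a * b * (a + b + c) * (a + b - c) ≤ (a + b) ^ 3 * (a + b - c) :=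
        mul_le_mul_of_nonneg_right hcube (by linarith)
    _ = (a + b) * (a + b - c) * (a + b) ^ 2 := by ring

theorem infDist_affineSpan_pair_sq_le {V : Type*} [NormedAddCommGroup V] [InnerProductSpace ℝ V]
    (x q y : V) :
    infDist q (affineSpan ℝ {x, y} : Set V) ^ 2 ≤
      (‖x - q‖ + ‖q - y‖) * (‖x - q‖ + ‖q - y‖ - ‖x - y‖) := by
  set a := ‖x - q‖
  set b := ‖q - y‖
  set z := AffineMap.lineMap x y (a / (a + b))
  have hz : z ∈ affineSpan ℝ {x, y} :=
    AffineMap.lineMap_mem _ (mem_affineSpan ℝ (Set.mem_insert _ _))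
      (mem_affineSpan ℝ (Set.mem_insert_of_mem _ rfl))
  have hqz : ‖q - z‖ ^ 2 = (1 - a / (a + b)) * a ^ 2 + a / (a + b) * b ^ 2
      - a / (a + b) * (1 - a / (a + b)) * ‖x - y‖ ^ 2 := by
    rw [norm_sub_lineMap_sq, norm_sub_rev q x]
  calc infDist q (affineSpan ℝ {x, y} : Set V) ^ 2 ≤ ‖q - z‖ ^ 2 := by
        rw [← dist_eq_norm]
        exact pow_le_pow_left₀ infDist_nonneg (infDist_le_dist_of_mem hz) 2
    _ ≤ (a + b) * (a + b - ‖x - y‖) := by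
        rw [hqz]
        exact stewart_ratio_le_mul_sub (norm_nonneg _) (norm_nonneg _)
          (norm_sub_le_norm_sub_add_norm_sub x q y)

theorem stmt9_general {d : ℕ} (x q y : EuclideanSpace ℝ (Fin d)) :
    ‖x - q‖ + ‖q - y‖ - ‖x - y‖ ≥
      (Metric.infDist q (affineSpan ℝ ({x, y} : Set (EuclideanSpace ℝ (Fin d))) : Set (EuclideanSpace ℝ (Fin d)))) ^ 2
        / (‖x - q‖ + ‖q - y‖) :=
  div_le_of_le_mul₀ (by positivity)
    (sub_nonneg.mpr (norm_sub_le_norm_sub_add_norm_sub x q y))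
    (by rw [mul_comm]; exact infDist_affineSpan_pair_sq_le x q y)

theorem stmt9 {d : ℕ} (x q y : EuclideanSpace ℝ (Fin d))
    (ha : 0 < ‖x - q‖) (hb : 0 < ‖q - y‖) :
    ‖x - q‖ + ‖q - y‖ - ‖x - y‖ ≥
      (Metric.infDist q (affineSpan ℝ ({x, y} : Set (EuclideanSpace ℝ (Fin d))) : Set (EuclideanSpace ℝ (Fin d)))) ^ 2
        / (‖x - q‖ + ‖q - y‖) :=
  stmt9_general x q y
end

section
/- Let B₁* = {(x₁,x₂) ∈ ℝ×ℝ^{d−1} : |x₁| ≤ ψ, ‖x₂‖ ≤ u} and B₂* = n·e₁ + B₁*, where 0 < ψ ≤ n/10 and 0 < u with u² ≤ nψ. Then for every x ∈ B₁* and y ∈ B₂*: n − 2ψ ≤ ‖x−y‖ ≤ n + 2ψ + 4u²/(n + 2ψ); in particular if additionally u² ≤ ψ·n then ‖x−y‖ ≤ n + 6ψ. -/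
/-!
The first coordinate of `x - y` lies within `2ψ` of `-n` and the second has norm at most `2u`,
so `‖x - y‖² = a² + b²` with `n - 2ψ ≤ a ≤ n + 2ψ` and `b ≤ 2u`. The lower bound is `a ≤ ‖x - y‖`;
the upper bound is `√(A² + B²) ≤ A + B² / (2A)` with `A = n + 2ψ`, `B = 2u`, and `u² ≤ nψ`
makes the correction `4u² / (n + 2ψ)` at most `4ψ`.
-/

theorem WithLp.prod_norm_le_add_sq_div {α β : Type*} [SeminormedAddCommGroup α]
    [SeminormedAddCommGroup β] (z : WithLp 2 (α × β)) {A B : ℝ} (hA : 0 < A)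
    (hfst : ‖z.fst‖ ≤ A) (hsnd : ‖z.snd‖ ≤ B) :
    ‖z‖ ≤ A + B ^ 2 / (2 * A) := by
  have hsq : ‖z‖ ^ 2 ≤ (A + B ^ 2 / (2 * A)) ^ 2 :=
    calc ‖z‖ ^ 2 = ‖z.fst‖ ^ 2 + ‖z.snd‖ ^ 2 := WithLp.prod_norm_sq_eq_of_L2 z
      _ ≤ A ^ 2 + B ^ 2 := by gcongr
      _ ≤ (A + B ^ 2 / (2 * A)) ^ 2 := by
        have : (A + B ^ 2 / (2 * A)) ^ 2 = A ^ 2 + B ^ 2 + (B ^ 2 / (2 * A)) ^ 2 := by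
          field_simp; ring
        nlinarith [sq_nonneg (B ^ 2 / (2 * A))]
  exact le_of_sq_le_sq hsq (by positivity)

theorem stmt11_general (m : ℕ) (n ψ u : ℝ)
    (hψ : 0 < ψ) (hψn : ψ ≤ n / 10) (hun : u ^ 2 ≤ n * ψ)
    (x y : WithLp 2 (ℝ × EuclideanSpace ℝ (Fin m)))
    (hx1 : |(WithLp.equiv 2 (ℝ × EuclideanSpace ℝ (Fin m)) x).1| ≤ ψ)
    (hx2 : ‖(WithLp.equiv 2 (ℝ × EuclideanSpace ℝ (Fin m)) x).2‖ ≤ u)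
    (hy1 : |(WithLp.equiv 2 (ℝ × EuclideanSpace ℝ (Fin m)) y).1 - n| ≤ ψ)
    (hy2 : ‖(WithLp.equiv 2 (ℝ × EuclideanSpace ℝ (Fin m)) y).2‖ ≤ u) :
    n - 2 * ψ ≤ ‖x - y‖ ∧
    ‖x - y‖ ≤ n + 2 * ψ + 4 * u ^ 2 / (n + 2 * ψ) ∧
    ‖x - y‖ ≤ n + 6 * ψ := by
  have hA : 0 < n + 2 * ψ := by linarith
  obtain ⟨hx1l, hx1u⟩ : -ψ ≤ x.fst ∧ x.fst ≤ ψ := abs_le.1 hx1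
  obtain ⟨hy1l, hy1u⟩ : -ψ ≤ y.fst - n ∧ y.fst - n ≤ ψ := abs_le.1 hy1
  have hfst : ‖(x - y).fst‖ = y.fst - x.fst := by
    rw [WithLp.sub_fst, Real.norm_eq_abs, abs_sub_comm, abs_of_nonneg (by linarith)]
  have hsnd : ‖(x - y).snd‖ ≤ 2 * u := by
    rw [WithLp.sub_snd, two_mul]
    exact (norm_sub_le _ _).trans (add_le_add hx2 hy2)
  have hupper : ‖x - y‖ ≤ n + 2 * ψ + 4 * u ^ 2 / (n + 2 * ψ) :=
    calc ‖x - y‖ ≤ n + 2 * ψ + (2 * u) ^ 2 / (2 * (n + 2 * ψ)) :=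
          (x - y).prod_norm_le_add_sq_div hA (by linarith) hsnd
      _ = n + 2 * ψ + 2 * u ^ 2 / (n + 2 * ψ) := by field_simp
      _ ≤ n + 2 * ψ + 4 * u ^ 2 / (n + 2 * ψ) := by gcongr; norm_num
  have hcorrection : 4 * u ^ 2 / (n + 2 * ψ) ≤ 4 * ψ := by
    rw [div_le_iff₀ hA]; nlinarith
  refine ⟨?_, hupper, by linarith⟩
  calc n - 2 * ψ ≤ ‖(x - y).fst‖ := by linarith
    _ ≤ ‖x - y‖ := WithLp.norm_fst_le _ _

theorem stmt11 (m : ℕ) (n ψ u : ℝ)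
    (hψ : 0 < ψ) (hψn : ψ ≤ n / 10) (hu : 0 < u) (hun : u ^ 2 ≤ n * ψ)
    (x y : WithLp 2 (ℝ × EuclideanSpace ℝ (Fin m)))
    (hx1 : |(WithLp.equiv 2 (ℝ × EuclideanSpace ℝ (Fin m)) x).1| ≤ ψ)
    (hx2 : ‖(WithLp.equiv 2 (ℝ × EuclideanSpace ℝ (Fin m)) x).2‖ ≤ u)
    (hy1 : |(WithLp.equiv 2 (ℝ × EuclideanSpace ℝ (Fin m)) y).1 - n| ≤ ψ)
    (hy2 : ‖(WithLp.equiv 2 (ℝ × EuclideanSpace ℝ (Fin m)) y).2‖ ≤ u) :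
    n - 2 * ψ ≤ ‖x - y‖ ∧
    ‖x - y‖ ≤ n + 2 * ψ + 4 * u ^ 2 / (n + 2 * ψ) ∧
    ‖x - y‖ ≤ n + 6 * ψ :=
  stmt11_general m n ψ u hψ hψn hun x y hx1 hx2 hy1 hy2
end

section
/- Let x ∈ B̄₁ = {(x₁,x₂) : |x₁| ≤ ψ, ‖x₂‖ ≤ √(nψ)}, y ∈ B̄₂ = n·e₁ + B̄₁, and q = (q₁, q₂) with |q₁ − λ| ≤ ψ for some λ ∈ [w, n−w] and ‖q₂‖ ≥ K·v, where v = √(nψ)·L^β for parameters L ≥ 1, β = 1/(2κ₁), K·v ≥ 2√(nψ), ψ ≤ n/100, w ≥ 4ψ. Then ‖x−q‖ + ‖q−y‖ − ‖x−y‖ ≥ (K²/8)·ψ·L^{2β}. -/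
/-!
Write `P = ‖x₂ - q₂‖ + ‖q₂ - y₂‖` for the transverse length of the path through `q` and
`C = ‖x₂ - y₂‖` for the transverse chord. Minkowski's inequality in the plane bounds
`‖x - q‖ + ‖q - y‖` below by `√((y₁ - x₁)² + P²)`, whereas `‖x - y‖ = √((y₁ - x₁)² + C²)`.
The parallelogram law, together with `‖q₂‖ ≥ t ≥ 2 max ‖x₂‖ ‖y₂‖`, gives `P² - C² ≥ t²`; as
`‖x - y‖ ≤ 2n`, the two square roots then differ by at least `t² / (8n)`, which for `t = Kv`
is `(K² / 8) ψ L^{2β}`.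
-/

open WithLp

theorem norm_le_abs_fst_add_norm_snd {E : Type*} [SeminormedAddCommGroup E]
    (z : WithLp 2 (ℝ × E)) : ‖z‖ ≤ |z.fst| + ‖z.snd‖ := by
  rw [prod_norm_eq_of_L2, Real.norm_eq_abs]
  exact Real.sqrt_le_iff.mpr ⟨by positivity, by nlinarith [abs_nonneg z.fst, norm_nonneg z.snd]⟩

theorem sqrt_sq_add_sq_le_norm_sub_add_norm_sub {E : Type*} [SeminormedAddCommGroup E]
    (x q y : WithLp 2 (ℝ × E)) :
    √((y.fst - x.fst) ^ 2 + (‖x.snd - q.snd‖ + ‖q.snd - y.snd‖) ^ 2) ≤ ‖x - q‖ + ‖q - y‖ := by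
  -- each leg has the norm of the planar vector of its longitudinal and transverse lengths
  let u : WithLp 2 (ℝ × ℝ) := toLp 2 (q.fst - x.fst, ‖x.snd - q.snd‖)
  let w : WithLp 2 (ℝ × ℝ) := toLp 2 (y.fst - q.fst, ‖q.snd - y.snd‖)
  have hu : ‖u‖ = ‖x - q‖ := by
    simp only [u, prod_norm_eq_of_L2, toLp_fst, toLp_snd, sub_fst, sub_snd, Real.norm_eq_abs,
      sq_abs, sub_sq']
    ring_nf
  have hw : ‖w‖ = ‖q - y‖ := by
    simp only [w, prod_norm_eq_of_L2, toLp_fst, toLp_snd, sub_fst, sub_snd, Real.norm_eq_abs,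
      sq_abs]
    ring_nf
  calc √((y.fst - x.fst) ^ 2 + (‖x.snd - q.snd‖ + ‖q.snd - y.snd‖) ^ 2) = ‖u + w‖ := by
        simp only [u, w, prod_norm_eq_of_L2, add_fst, add_snd, toLp_fst, toLp_snd,
          Real.norm_eq_abs, sq_abs, abs_of_nonneg (add_nonneg (norm_nonneg _) (norm_nonneg _))]
        ring_nf
    _ ≤ ‖u‖ + ‖w‖ := norm_add_le u w
    _ = ‖x - q‖ + ‖q - y‖ := by rw [hu, hw]

theorem two_mul_norm_sub_norm_add_le {F : Type*} [SeminormedAddCommGroup F] [NormedSpace ℝ F]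
    (a b c : F) : 2 * ‖c‖ - ‖a + b‖ ≤ ‖a - c‖ + ‖c - b‖ :=
  calc 2 * ‖c‖ - ‖a + b‖ = ‖(2 : ℝ) • c‖ - ‖a + b‖ := by rw [norm_smul, Real.norm_two]
    _ ≤ ‖(2 : ℝ) • c - (a + b)‖ := norm_sub_norm_le _ _
    _ = ‖(c - a) + (c - b)‖ := by rw [two_smul]; abel_nf
    _ ≤ ‖c - a‖ + ‖c - b‖ := norm_add_le _ _
    _ = ‖a - c‖ + ‖c - b‖ := by rw [norm_sub_rev c a]

theorem sq_add_norm_sub_sq_le {F : Type*} [NormedAddCommGroup F] [InnerProductSpace ℝ F]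
    {a b c : F} {s t : ℝ} (ha : ‖a‖ ≤ s) (hb : ‖b‖ ≤ s) (hst : 2 * s ≤ t) (htc : t ≤ ‖c‖) :
    t ^ 2 + ‖a - b‖ ^ 2 ≤ (‖a - c‖ + ‖c - b‖) ^ 2 := by
  have hpar := parallelogram_law_with_norm ℝ a b
  have hab : ‖a + b‖ ^ 2 + ‖a - b‖ ^ 2 ≤ 4 * s ^ 2 := by
    nlinarith [norm_nonneg a, norm_nonneg b]
  have hr : ‖a + b‖ ≤ 2 * s := by nlinarith [norm_nonneg (a + b), norm_nonneg a]
  have hP : 2 * t - ‖a + b‖ ≤ ‖a - c‖ + ‖c - b‖ := by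
    linarith [two_mul_norm_sub_norm_add_le a b c]
  have hP_sq : (2 * t - ‖a + b‖) ^ 2 ≤ (‖a - c‖ + ‖c - b‖) ^ 2 :=
    pow_le_pow_left₀ (by linarith [norm_nonneg a]) hP 2
  nlinarith [norm_nonneg (a + b), norm_nonneg a]

theorem le_triangle_defect {E : Type*} [NormedAddCommGroup E] [InnerProductSpace ℝ E]
    {x q y : WithLp 2 (ℝ × E)} {s t D T : ℝ} (hx : ‖x.snd‖ ≤ s) (hy : ‖y.snd‖ ≤ s)
    (hst : 2 * s ≤ t) (htq : t ≤ ‖q.snd‖) (hxy : ‖x - y‖ ≤ D) (hT : 0 ≤ T)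
    (hTD : 2 * T * D + T ^ 2 ≤ t ^ 2) :
    T ≤ ‖x - q‖ + ‖q - y‖ - ‖x - y‖ := by
  have hdefect := sq_add_norm_sub_sq_le hx hy hst htq
  have hxy_sq : ‖x - y‖ ^ 2 = (y.fst - x.fst) ^ 2 + ‖x.snd - y.snd‖ ^ 2 := by
    rw [prod_norm_sq_eq_of_L2, sub_fst, sub_snd, Real.norm_eq_abs, sq_abs, ← neg_sub, neg_sq]
  have hsqrt : ‖x - y‖ + T ≤ √((y.fst - x.fst) ^ 2 + (‖x.snd - q.snd‖ + ‖q.snd - y.snd‖) ^ 2) :=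
    Real.le_sqrt_of_sq_le (by nlinarith [norm_nonneg (x - y)])
  linarith [sqrt_sq_add_sq_le_norm_sub_add_norm_sub x q y]

theorem stmt18_general (m : ℕ) (n ψ v K L β : ℝ)
    (hψ : 0 < ψ) (hψn : ψ ≤ n / 100) (hL : 1 ≤ L)
    (hv : v = Real.sqrt (n * ψ) * L ^ β)
    (hKv : K * v ≥ 2 * Real.sqrt (n * ψ)) (hKv' : K * v ≤ n)
    (x y q : WithLp 2 (ℝ × EuclideanSpace ℝ (Fin m)))
    (hx1 : |(WithLp.equiv 2 (ℝ × EuclideanSpace ℝ (Fin m)) x).1| ≤ ψ)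
    (hx2 : ‖(WithLp.equiv 2 (ℝ × EuclideanSpace ℝ (Fin m)) x).2‖ ≤ Real.sqrt (n * ψ))
    (hy1 : |(WithLp.equiv 2 (ℝ × EuclideanSpace ℝ (Fin m)) y).1 - n| ≤ ψ)
    (hy2 : ‖(WithLp.equiv 2 (ℝ × EuclideanSpace ℝ (Fin m)) y).2‖ ≤ Real.sqrt (n * ψ))
    (hq2 : ‖(WithLp.equiv 2 (ℝ × EuclideanSpace ℝ (Fin m)) q).2‖ ≥ K * v) :
    ‖x - q‖ + ‖q - y‖ - ‖x - y‖ ≥ K ^ 2 / 8 * ψ * L ^ (2 * β) := by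
  have hn : 0 < n := by linarith
  have hs : √(n * ψ) ≤ n / 10 :=
    Real.sqrt_le_iff.mpr ⟨by positivity, by nlinarith⟩
  simp only [WithLp.equiv_apply, ofLp_fst, ofLp_snd] at hx1 hx2 hy1 hy2 hq2
  have hxy : ‖x - y‖ ≤ 2 * n := by
    obtain ⟨hx1l, hx1r⟩ := abs_le.mp hx1
    obtain ⟨hy1l, hy1r⟩ := abs_le.mp hy1
    have hfst : |x.fst - y.fst| ≤ n + 2 * ψ := abs_le.mpr ⟨by linarith, by linarith⟩
    have hsnd := norm_sub_le x.snd y.snd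
    have hxy := norm_le_abs_fst_add_norm_snd (x - y)
    rw [sub_fst, sub_snd] at hxy
    linarith
  have hT : K ^ 2 / 8 * ψ * L ^ (2 * β) = (K * v) ^ 2 / (8 * n) := by
    rw [mul_comm 2 β, Real.rpow_mul (by linarith), Real.rpow_two, hv, mul_pow, mul_pow,
      Real.sq_sqrt (by positivity)]
    field_simp
  rw [ge_iff_le, hT]
  refine le_triangle_defect hx2 hy2 hKv hq2 hxy (by positivity) ?_
  have ht : 0 ≤ K * v := le_trans (by positivity) hKv
  have hT_le : (K * v) ^ 2 / (8 * n) ≤ K * v / 8 := by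
    rw [div_le_iff₀ (by positivity)]; nlinarith
  have hTD : 2 * ((K * v) ^ 2 / (8 * n)) * (2 * n) = (K * v) ^ 2 / 2 := by field_simp; ring
  nlinarith

theorem stmt18 (m : ℕ) (n ψ w v K L β κ₁ lam : ℝ)
    (hκ₁ : 0 < κ₁) (hβ : β = 1 / (2 * κ₁))
    (hψ : 0 < ψ) (hψn : ψ ≤ n / 100) (hw : w ≥ 4 * ψ) (hL : 1 ≤ L)
    (hv : v = Real.sqrt (n * ψ) * L ^ β)
    (hKpos : 0 < K)
    (hKv : K * v ≥ 2 * Real.sqrt (n * ψ)) (hKv' : K * v ≤ n)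
    (hlam : lam ∈ Set.Icc w (n - w))
    (x y q : WithLp 2 (ℝ × EuclideanSpace ℝ (Fin m)))
    (hx1 : |(WithLp.equiv 2 (ℝ × EuclideanSpace ℝ (Fin m)) x).1| ≤ ψ)
    (hx2 : ‖(WithLp.equiv 2 (ℝ × EuclideanSpace ℝ (Fin m)) x).2‖ ≤ Real.sqrt (n * ψ))
    (hy1 : |(WithLp.equiv 2 (ℝ × EuclideanSpace ℝ (Fin m)) y).1 - n| ≤ ψ)
    (hy2 : ‖(WithLp.equiv 2 (ℝ × EuclideanSpace ℝ (Fin m)) y).2‖ ≤ Real.sqrt (n * ψ))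
    (hq1 : |(WithLp.equiv 2 (ℝ × EuclideanSpace ℝ (Fin m)) q).1 - lam| ≤ ψ)
    (hq2 : ‖(WithLp.equiv 2 (ℝ × EuclideanSpace ℝ (Fin m)) q).2‖ ≥ K * v) :
    ‖x - q‖ + ‖q - y‖ - ‖x - y‖ ≥ K ^ 2 / 8 * ψ * L ^ (2 * β) :=
  stmt18_general m n ψ v K L β hψ hψn hL hv hKv hKv' x y q hx1 hx2 hy1 hy2 hq2
end
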